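/- Let C be an m×n Cauchon diagram with associated permutation v, let k ∈ {n+1,...,m+n-1}, and let (x_1,y_1),...,(x_t,y_t) be the chain rooted at box k on the south-east border. Then ({1,...,m} \ {x_1,...,x_t}) ∪ {y_1,...,y_t} = ({1,...,m+n} \ v({1,...,k})) ∪ {1,...,k-n}, where v({1,...,k}) denotes the image of {1,...,k} under v. -/

import Mathlib

/-- The transposition `s_{a+b-m-1} = (a+b-m-1, a+b-m)` assigned to the grid square `(a,b)`. -/
def sqPerm (m : ℕ) (p : ℕ × ℕ) : Equiv.Perm ℕ :=
  Equiv.swap (p.1 + p.2 - m - 1) (p.1 + p.2 - m)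

/-- The reading word of the set of grid squares satisfying `P`: rows are read from the
top (`a = m`) down to the bottom (`a = 1`), and within each row columns are read from the
left (`b = m+1`) to the right (`b = m+n`); factors are multiplied so that the last factor
in reading order is applied first. -/
def readingWord (m n : ℕ) (P : ℕ × ℕ → Bool) : Equiv.Perm ℕ :=
  ((List.range m).map fun i =>
    (((List.range n).map fun j =>
      if P (m - i, m + 1 + j) then sqPerm m (m - i, m + 1 + j) else 1)).prod).prod

/-- `(a,b)` is a square of the `m × n` grid: `1 ≤ a ≤ m`, `m+1 ≤ b ≤ m+n`. -/
def InGrid (m n : ℕ) (p : ℕ × ℕ) : Prop :=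
  1 ≤ p.1 ∧ p.1 ≤ m ∧ m + 1 ≤ p.2 ∧ p.2 ≤ m + n

/-- A colouring (`true` = black, `false` = white) is a Cauchon diagram if for every black
square `(a,b)`, either every square `(a,b')` with `b' < b` is black, or every square
`(a',b)` with `a' > a` is black. -/
def IsCauchon (m n : ℕ) (col : ℕ × ℕ → Bool) : Prop :=
  ∀ a b, InGrid m n (a, b) → col (a, b) = true →
    (∀ b', m + 1 ≤ b' → b' < b → col (a, b') = true) ∨
    (∀ a', a < a' → a' ≤ m → col (a', b) = true)

/-- The permutation associated to a colouring: the reading word of its set of black squares. -/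
def assocPerm (m n : ℕ) (col : ℕ × ℕ → Bool) : Equiv.Perm ℕ :=
  readingWord m n col

/-- `v_{x,y}`: the reading word of the black squares `(a,b)` with `a ≥ x` and `b ≤ y`. -/
def vAt (m n : ℕ) (col : ℕ × ℕ → Bool) (x y : ℕ) : Equiv.Perm ℕ :=
  readingWord m n fun p => col p && decide (x ≤ p.1) && decide (p.2 ≤ y)

/-- `w_{x,y}`: the reading word of all grid squares `(a,b)` with `a ≥ x` and `b ≤ y`. -/
def wAt (m n x y : ℕ) : Equiv.Perm ℕ :=
  readingWord m n fun p => decide (x ≤ p.1) && decide (p.2 ≤ y)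

/-- Box `k` on the south-east border: `(1, m+k)` if `k ≤ n`, and `(k-n+1, m+n)` otherwise. -/
def boxSE (m n k : ℕ) : ℕ × ℕ :=
  if k ≤ n then (1, m + k) else (k - n + 1, m + n)

/-- `(X 1, Y 1), ..., (X t, Y t)` is the chain rooted at the square `(x,y)` of the colouring
`col` (with `t = 0` for the empty chain). -/
def IsChainRootedAt (m n : ℕ) (col : ℕ × ℕ → Bool) (x y : ℕ)
    (t : ℕ) (X Y : ℕ → ℕ) : Prop :=
  -- every member of the chain is a white square of the grid
  (∀ i, 1 ≤ i → i ≤ t → InGrid m n (X i, Y i) ∧ col (X i, Y i) = false) ∧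
  -- if `(x,y)` is white, the chain starts at `(x,y)`
  (col (x, y) = false → 1 ≤ t ∧ X 1 = x ∧ Y 1 = y) ∧
  -- if `(x,y)` is black and the chain is nonempty, it starts at the white square
  -- weakly north-west of `(x,y)` nearest to it
  (col (x, y) = true → 1 ≤ t →
    x ≤ X 1 ∧ Y 1 ≤ y ∧
      ∀ a b, InGrid m n (a, b) → col (a, b) = false → x ≤ a → b ≤ y →
        X 1 ≤ a ∧ b ≤ Y 1) ∧
  -- the chain is empty only when there is no white square weakly north-west of `(x,y)`
  (t = 0 → ∀ a b, InGrid m n (a, b) → col (a, b) = false → x ≤ a → b ≤ y → False) ∧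
  -- inductive step: each next member is the nearest white square strictly north-west
  (∀ i, 1 ≤ i → i < t →
    X i < X (i + 1) ∧ Y (i + 1) < Y i ∧
      ∀ a b, InGrid m n (a, b) → col (a, b) = false → X i < a → b < Y i →
        X (i + 1) ≤ a ∧ b ≤ Y (i + 1)) ∧
  -- termination: no white square strictly north-west of the last member
  (1 ≤ t → ∀ a b, InGrid m n (a, b) → col (a, b) = false → X t < a → b < Y t → False)

/-! With `k = n + r`, the chain is rooted at `(r+1, m+n)`. The reading word factors as
`v = R_m ⋯ R_1`, where the word `R_a` of row `a` is an increasing product of adjacent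
transpositions `s_{a+j}`: it fixes every point below `a`, sends `a+j` to `a+j+1` when the square
`(a, m+1+j)` is black, and to a point of `[a, a+j]` when it is white. By induction on `a ≥ r`,
`R_a ⋯ R_1` maps `{1,…,n+r}` onto `{1,…,r}`, the rows of the chain members in rows `≤ a`, and the
positions `a+1,…,a+n` except those lying under the columns of these chain members. The step from
`a` to `a+1` uses that the chain is greedy: a white square of row `a+1` outside those columns lies
weakly west of the chain member in row `a+1`, and there is no such square if row `a+1` holds no
chain member. For `a = m` this is the claimed identity. -/

open Finset

theorem Equiv.Perm.mapsTo_list_prod {α : Type*} {s : Set α} {l : List (Equiv.Perm α)}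
    (h : ∀ σ ∈ l, Set.MapsTo σ s s) : Set.MapsTo l.prod s s := by
  induction l with
  | nil => exact Set.mapsTo_id s
  | cons σ l ih =>
    rw [List.prod_cons, Equiv.Perm.coe_mul]
    exact (h σ List.mem_cons_self).comp (ih fun τ hτ => h τ (List.mem_cons_of_mem σ hτ))

theorem Equiv.swap_mapsTo {α : Type*} [DecidableEq α] {s : Set α} {a b : α}
    (h : a ∈ s ↔ b ∈ s) : Set.MapsTo (Equiv.swap a b) s s := by
  intro x hx
  rw [Equiv.swap_apply_def]
  split_ifs with hxa hxb
  · exact h.1 (hxa ▸ hx)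
  · exact h.2 (hxb ▸ hx)
  · exact hx

def ascWord (c n : ℕ) (g : ℕ → Bool) : Equiv.Perm ℕ :=
  ((List.range n).map fun j => if g j then Equiv.swap (c + j) (c + j + 1) else 1).prod

section AscWord

variable {c n : ℕ} {g : ℕ → Bool}

theorem ascWord_mapsTo {s : Set ℕ} (h : ∀ j < n, (c + j ∈ s ↔ c + j + 1 ∈ s)) :
    Set.MapsTo (ascWord c n g) s s := by
  refine Equiv.Perm.mapsTo_list_prod fun σ hσ => ?_
  obtain ⟨j, hj, rfl⟩ := List.mem_map.1 hσ
  split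
  · exact Equiv.swap_mapsTo (h j (List.mem_range.1 hj))
  · exact Set.mapsTo_id s

theorem ascWord_apply_of_lt {x : ℕ} (hx : x < c) : ascWord c n g x = x :=
  ascWord_mapsTo (s := {x}) (fun j _ => by simp only [Set.mem_singleton_iff]; omega) rfl

theorem ascWord_apply_of_gt {x : ℕ} (hx : c + n < x) : ascWord c n g x = x :=
  ascWord_mapsTo (s := {x}) (fun j _ => by simp only [Set.mem_singleton_iff]; omega) rfl

theorem ascWord_eq_mul {j : ℕ} (hj : j < n) :
    ascWord c n g = ascWord c j g * (if g j then Equiv.swap (c + j) (c + j + 1) else 1) *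
      ascWord (c + j + 1) (n - j - 1) (fun i => g (j + 1 + i)) := by
  obtain ⟨k, rfl⟩ : ∃ k, n = j + 1 + k := ⟨n - j - 1, by omega⟩
  rw [show j + 1 + k - j - 1 = k by omega, ascWord, List.range_add, List.range_succ]
  simp only [List.map_append, List.prod_append, List.map_map, List.map_cons, List.map_nil,
    List.prod_cons, List.prod_nil, mul_one, ascWord]
  congr 3
  funext i
  simp only [Function.comp_apply, add_assoc]

theorem ascWord_apply_of_true {j : ℕ} (hj : j < n) (hg : g j = true) :
    ascWord c n g (c + j) = c + j + 1 := by
  rw [ascWord_eq_mul hj, if_pos hg, Equiv.Perm.mul_apply, Equiv.Perm.mul_apply,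
    ascWord_apply_of_lt (c := c + j + 1) (by omega), Equiv.swap_apply_left,
    ascWord_apply_of_gt (by omega)]

theorem ascWord_apply_of_false {j : ℕ} (hj : j < n) (hg : g j = false) :
    c ≤ ascWord c n g (c + j) ∧ ascWord c n g (c + j) ≤ c + j := by
  rw [ascWord_eq_mul hj, if_neg (by simp [hg]), mul_one, Equiv.Perm.mul_apply,
    ascWord_apply_of_lt (c := c + j + 1) (by omega)]
  exact ascWord_mapsTo (s := Set.Icc c (c + j)) (fun i hi => by simp only [Set.mem_Icc]; omega)
    (Set.mem_Icc.2 ⟨by omega, le_rfl⟩)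

theorem image_ascWord_of_false_mem {J : Finset ℕ} (hJ : ∀ j < n, g j = false → j ∈ J) :
    ((range n \ J).image (c + ·)).image (ascWord c n g) = (range n \ J).image (c + 1 + ·) := by
  rw [image_image]
  refine image_congr fun j hj => ?_
  simp only [coe_sdiff, coe_range, Set.mem_sdiff, Set.mem_Iio] at hj
  have hg : g j = true := by
    by_contra h
    exact hj.2 (hJ j hj.1 (by simpa using h))
  simp only [Function.comp_apply, ascWord_apply_of_true hj.1 hg]
  omega

theorem image_ascWord_of_forall_lt {s : Finset ℕ} (hs : ∀ x ∈ s, x < c) :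
    s.image (ascWord c n g) = s := by
  conv_rhs => rw [← image_id (s := s)]
  exact image_congr fun x hx => ascWord_apply_of_lt (hs x hx)

theorem image_ascWord_of_false_le {J : Finset ℕ} {j₀ : ℕ}
    (hj₀ : j₀ < n) (hg₀ : g j₀ = false) (hJ : ∀ j ∈ J, j₀ < j)
    (hwhite : ∀ j < n, g j = false → j ∈ J ∨ j ≤ j₀) :
    ((range n \ J).image (c + ·)).image (ascWord c n g) =
      insert c ((range n \ insert j₀ J).image (c + 1 + ·)) := by
  have hj₀J : j₀ ∈ range n \ J := mem_sdiff.2 ⟨mem_range.2 hj₀, fun h => (hJ j₀ h).false⟩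
  refine eq_of_subset_of_card_le (fun y hy => ?_) ?_
  · simp only [image_image, mem_image, mem_sdiff, mem_range, Function.comp_apply] at hy
    obtain ⟨j, ⟨hjn, hjJ⟩, rfl⟩ := hy
    simp only [mem_insert, mem_image, mem_sdiff, mem_range, not_or]
    cases hg : g j
    · obtain ⟨hcy, hyj⟩ := ascWord_apply_of_false hjn hg
      have hjj₀ : j ≤ j₀ := (hwhite j hjn hg).resolve_left hjJ
      rcases hcy.eq_or_lt with hc | hc
      · exact Or.inl hc.symm
      · refine Or.inr ⟨ascWord c n g (c + j) - c - 1,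
          ⟨by omega, by omega, fun hJ' => ?_⟩, by omega⟩
        have := hJ _ hJ'
        omega
    · rw [ascWord_apply_of_true hjn hg]
      exact Or.inr ⟨j, ⟨hjn, fun h => by simp [h, hg₀] at hg, hjJ⟩, by omega⟩
  · rw [card_insert_of_notMem fun hc => by obtain ⟨_, _, hc⟩ := mem_image.1 hc; omega, card_image_of_injective _ (Equiv.injective _),
      card_image_of_injective _ (add_right_injective _), sdiff_insert,
      card_erase_of_mem hj₀J, card_image_of_injective _ (add_right_injective _)]
    have := card_pos.2 ⟨j₀, hj₀J⟩
    omega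

end AscWord

def rowWord (m n : ℕ) (P : ℕ × ℕ → Bool) (a : ℕ) : Equiv.Perm ℕ :=
  ascWord a n fun j => P (a, m + 1 + j)

def lowerWord (m n : ℕ) (P : ℕ × ℕ → Bool) (a : ℕ) : Equiv.Perm ℕ :=
  ((List.range a).map fun i => rowWord m n P (a - i)).prod

section LowerWord

variable {m n : ℕ} {P : ℕ × ℕ → Bool}

theorem readingWord_eq_lowerWord : readingWord m n P = lowerWord m n P m := by
  unfold readingWord lowerWord rowWord ascWord sqPerm
  congr! 7
  dsimp only
  congr 1 <;> omega

theorem lowerWord_succ (a : ℕ) :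
    lowerWord m n P (a + 1) = rowWord m n P (a + 1) * lowerWord m n P a := by
  simp only [lowerWord, List.range_succ_eq_map, List.map_cons, List.prod_cons, List.map_map,
    Function.comp_def, Nat.sub_zero, Nat.succ_eq_add_one, Nat.add_sub_add_right]

theorem image_lowerWord_Icc (a : ℕ) :
    (Icc 1 (a + n)).image (lowerWord m n P a) = Icc 1 (a + n) := by
  have hmaps : Set.MapsTo (lowerWord m n P a) (Set.Icc 1 (a + n)) (Set.Icc 1 (a + n)) := by
    refine Equiv.Perm.mapsTo_list_prod fun σ hσ => ?_
    obtain ⟨i, hi, rfl⟩ := List.mem_map.1 hσ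
    have := List.mem_range.1 hi
    exact ascWord_mapsTo fun j hj => by simp only [Set.mem_Icc]; omega
  refine eq_of_subset_of_card_le (fun y hy => ?_) (card_image_of_injective _ (Equiv.injective _)).ge
  obtain ⟨x, hx, rfl⟩ := mem_image.1 hy
  simpa using hmaps (by simpa using hx)

end LowerWord

namespace IsChainRootedAt

variable {m n : ℕ} {col : ℕ × ℕ → Bool} {x y t : ℕ} {X Y : ℕ → ℕ}

theorem X_lt_X_and_Y_lt_Y (h : IsChainRootedAt m n col x y t X Y) {i j : ℕ} (hi : 1 ≤ i) (hij : i < j)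
    (hj : j ≤ t) : X i < X j ∧ Y j < Y i := by
  induction j, hij using Nat.le_induction with
  | base => exact ⟨(h.2.2.2.2.1 i hi hj).1, (h.2.2.2.2.1 i hi hj).2.1⟩
  | succ j hij ih =>
    have := ih (by omega)
    have := h.2.2.2.2.1 j (by omega) (by omega)
    omega

theorem inGrid (h : IsChainRootedAt m n col x y t X Y) {i : ℕ} (hi : i ∈ Set.Icc 1 t) :
    InGrid m n (X i, Y i) :=
  (h.1 i hi.1 hi.2).1

theorem col_eq_false (h : IsChainRootedAt m n col x y t X Y) {i : ℕ} (hi : i ∈ Set.Icc 1 t) :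
    col (X i, Y i) = false :=
  (h.1 i hi.1 hi.2).2

theorem strictMonoOn (h : IsChainRootedAt m n col x y t X Y) : StrictMonoOn X (Set.Icc 1 t) :=
  fun _ hi _ hj hij => (h.X_lt_X_and_Y_lt_Y hi.1 hij hj.2).1

theorem strictAntiOn (h : IsChainRootedAt m n col x y t X Y) : StrictAntiOn Y (Set.Icc 1 t) :=
  fun _ hi _ hj hij => (h.X_lt_X_and_Y_lt_Y hi.1 hij hj.2).2

theorem le_X (h : IsChainRootedAt m n col x y t X Y) {i : ℕ} (hi : i ∈ Set.Icc 1 t) :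
    x ≤ X i := by
  have hX₁ : x ≤ X 1 := by
    cases hc : col (x, y)
    · exact (h.2.1 hc).2.1.ge
    · exact (h.2.2.1 hc (hi.1.trans hi.2)).1
  rcases hi.1.eq_or_lt with rfl | h1
  · exact hX₁
  · exact hX₁.trans (h.strictMonoOn ⟨le_rfl, hi.1.trans hi.2⟩ hi h1).le

theorem exists_of_col_eq_false (h : IsChainRootedAt m n col x y t X Y) {a b : ℕ}
    (hab : InGrid m n (a, b)) (hw : col (a, b) = false) (hxa : x ≤ a) (hby : b ≤ y) :
    ∃ j ∈ Set.Icc 1 t, X j ≤ a ∧ b ≤ Y j ∧ (X j < a → b = Y j) := by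
  obtain ⟨-, hwhiteRoot, hblackRoot, hempty, hstep, hlast⟩ := h
  -- otherwise the square lies strictly north-west of every chain member
  by_contra! hne
  have hNW : ∀ j, 1 ≤ j → j ≤ t → X j < a ∧ b < Y j := by
    intro j hj hjt
    induction j, hj using Nat.le_induction with
    | base =>
      have h₁ : X 1 ≤ a ∧ b ≤ Y 1 := by
        cases hc : col (x, y)
        · obtain ⟨-, h₁, h₂⟩ := hwhiteRoot hc
          omega
        · exact (hblackRoot hc hjt).2.2 a b hab hw hxa hby
      have := hne 1 ⟨le_rfl, hjt⟩ h₁.1 h₁.2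
      omega
    | succ j hj ih =>
      obtain ⟨ha, hb⟩ := ih (by omega)
      have h₁ := (hstep j hj (by omega)).2.2 a b hab hw ha hb
      have := hne (j + 1) ⟨by omega, hjt⟩ h₁.1 h₁.2
      omega
  rcases Nat.eq_zero_or_pos t with ht | ht
  · exact hempty ht a b hab hw hxa hby
  · exact hlast ht a b hab hw (hNW t ht le_rfl).1 (hNW t ht le_rfl).2

end IsChainRootedAt

def chainBelow (t : ℕ) (X : ℕ → ℕ) (a : ℕ) : Finset ℕ :=
  (Icc 1 t).filter (X · ≤ a)

theorem chainBelow_succ_of_forall_ne {t a : ℕ} {X : ℕ → ℕ} (h : ∀ j ∈ Icc 1 t, X j ≠ a + 1) :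
    chainBelow t X (a + 1) = chainBelow t X a :=
  filter_congr fun j hj => by have := h j hj; omega

theorem chainBelow_succ_of_eq {t a j : ℕ} {X : ℕ → ℕ} (hX : Set.InjOn X (Set.Icc 1 t))
    (hj : j ∈ Icc 1 t) (hXj : X j = a + 1) :
    chainBelow t X (a + 1) = insert j (chainBelow t X a) := by
  ext i
  simp only [chainBelow, mem_insert, mem_filter]
  constructor
  · rintro ⟨hi, hXi⟩
    by_cases hXi' : X i = a + 1
    · exact Or.inl (hX (by simpa using hi) (by simpa using hj) (hXi'.trans hXj.symm))
    · exact Or.inr ⟨hi, by omega⟩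
  · rintro (rfl | ⟨hi, hXi⟩)
    · exact ⟨hj, hXj.le⟩
    · exact ⟨hi, by omega⟩

/-- The image of `{1,…,n+r}` under `lowerWord m n col a` predicted by the chain: the column `Y i`
of a chain member in a row `≤ a` is recorded by its offset `Y i - (m+1)` among the positions
`a+1, …, a+n`. -/
def chainImage (m n r t : ℕ) (X Y : ℕ → ℕ) (a : ℕ) : Finset ℕ :=
  Icc 1 r ∪ (chainBelow t X a).image X ∪
    (range n \ (chainBelow t X a).image (Y · - (m + 1))).image (a + 1 + ·)

section Invariant

variable {m n r t : ℕ} {col : ℕ × ℕ → Bool} {X Y : ℕ → ℕ}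
  (h : IsChainRootedAt m n col (r + 1) (m + n) t X Y)
include h

theorem mem_or_exists_of_col_eq_false {a j : ℕ} (hra : r ≤ a) (ham : a < m) (hjn : j < n)
    (hw : col (a + 1, m + 1 + j) = false) :
    j ∈ (chainBelow t X a).image (Y · - (m + 1)) ∨
      ∃ i ∈ Icc 1 t, X i = a + 1 ∧ m + 1 + j ≤ Y i := by
  obtain ⟨i, hi, hXi, hYi, hbelow⟩ :=
    h.exists_of_col_eq_false ⟨by omega, by omega, by omega, by omega⟩ hw (by omega) (by omega)
  rcases hXi.lt_or_eq with hlt | heq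
  · refine Or.inl (mem_image.2 ⟨i, mem_filter.2 ⟨by simpa using hi, by omega⟩, ?_⟩)
    have := hbelow hlt
    omega
  · exact Or.inr ⟨i, by simpa using hi, heq, hYi⟩

theorem image_rowWord_chainImage {a : ℕ} (hra : r ≤ a) (ham : a < m) :
    (chainImage m n r t X Y a).image (rowWord m n col (a + 1)) = chainImage m n r t X Y (a + 1) := by
  have hX : ∀ x ∈ (chainBelow t X a).image X, x < a + 1 := by
    simp only [mem_image, chainBelow, mem_filter]
    rintro _ ⟨i, ⟨-, hi⟩, rfl⟩
    omega
  unfold chainImage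
  rw [image_union, image_union, rowWord,
    image_ascWord_of_forall_lt (fun x hx => by simp only [mem_Icc] at hx; omega),
    image_ascWord_of_forall_lt hX]
  by_cases hrow : ∃ j ∈ Icc 1 t, X j = a + 1
  · obtain ⟨j, hj, hXj⟩ := hrow
    have hjt : j ∈ Set.Icc 1 t := by simpa using hj
    obtain ⟨-, -, hYj₁, hYj₂⟩ := h.inGrid hjt
    rw [chainBelow_succ_of_eq h.strictMonoOn.injOn hj hXj, image_insert, image_insert, hXj,
      image_ascWord_of_false_le (j₀ := Y j - (m + 1))]
    · simp only [union_insert, insert_union]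
    · omega
    · rw [show m + 1 + (Y j - (m + 1)) = Y j by omega, ← hXj]
      exact h.col_eq_false hjt
    · simp only [mem_image, chainBelow, mem_filter]
      rintro _ ⟨i, ⟨hi, hXi⟩, rfl⟩
      have := h.strictAntiOn (by simpa using hi) hjt
        (h.strictMonoOn.lt_iff_lt (by simpa using hi) hjt |>.1 (by omega))
      omega
    · intro j' hj' hw
      refine (mem_or_exists_of_col_eq_false h hra ham hj' hw).imp_right ?_
      rintro ⟨i, hi, hXi, hYi⟩
      rw [h.strictMonoOn.injOn (by simpa using hi) hjt (hXi.trans hXj.symm)] at hYi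
      omega
  · push Not at hrow
    rw [chainBelow_succ_of_forall_ne hrow, image_ascWord_of_false_mem]
    intro j' hj' hw
    refine (mem_or_exists_of_col_eq_false h hra ham hj' hw).resolve_right ?_
    rintro ⟨i, hi, hXi, -⟩
    exact hrow i hi hXi

theorem image_lowerWord_Icc_eq_chainImage {a : ℕ} (hra : r ≤ a) (ham : a ≤ m) :
    (Icc 1 (n + r)).image (lowerWord m n col a) = chainImage m n r t X Y a := by
  induction a, hra using Nat.le_induction with
  | base =>
    have hempty : chainBelow t X r = ∅ :=
      filter_false_of_mem fun i hi => by have := h.le_X (by simpa using hi); omega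
    rw [add_comm, image_lowerWord_Icc, chainImage, hempty, image_empty, image_empty, sdiff_empty,
      union_empty, range_eq_Ico, image_add_left_Ico]
    ext x
    simp only [mem_union, mem_Icc, mem_Ico]
    omega
  | succ a hra ih =>
    rw [lowerWord_succ, Equiv.Perm.coe_mul, ← image_image, ih (by omega),
      image_rowWord_chainImage h hra (by omega)]

theorem image_readingWord_Icc (hrm : r ≤ m) :
    (Icc 1 (n + r)).image (readingWord m n col) =
      Icc 1 r ∪ (Icc 1 t).image X ∪ (Icc (m + 1) (m + n) \ (Icc 1 t).image Y) := by
  have hall : chainBelow t X m = Icc 1 t :=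
    filter_true_of_mem fun i hi => (h.inGrid (by simpa using hi)).2.1
  rw [readingWord_eq_lowerWord, image_lowerWord_Icc_eq_chainImage h hrm le_rfl, chainImage, hall,
    image_sdiff _ _ (add_right_injective _), image_image]
  congr 2
  · rw [range_eq_Ico, image_add_left_Ico]
    ext x
    simp only [mem_Icc, mem_Ico]
    omega
  · refine image_congr fun i hi => ?_
    have := (h.inGrid (by simpa using hi)).2.2.1
    simp only [Function.comp_apply]
    omega

end Invariant

theorem Icc_sdiff_union_eq {r m n : ℕ} {A B : Finset ℕ} (hrm : r ≤ m) (hA : A ⊆ Icc (r + 1) m)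
    (hB : B ⊆ Icc (m + 1) (m + n)) :
    (Icc 1 m \ A) ∪ B = (Icc 1 (m + n) \ (Icc 1 r ∪ A ∪ (Icc (m + 1) (m + n) \ B))) ∪ Icc 1 r := by
  ext x
  have hA' : x ∈ A → r + 1 ≤ x ∧ x ≤ m := fun hx => mem_Icc.1 (hA hx)
  have hB' : x ∈ B → m + 1 ≤ x ∧ x ≤ m + n := fun hx => mem_Icc.1 (hB hx)
  simp only [mem_union, mem_sdiff, mem_Icc]
  grind

theorem chain_at_boxSE_eq_complement_high_general
    (m n : ℕ)
    (col : ℕ × ℕ → Bool)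
    (k : ℕ) (hk1 : n + 1 ≤ k) (hkn : k ≤ m + n - 1)
    (t : ℕ) (X Y : ℕ → ℕ)
    (hchain : IsChainRootedAt m n col (boxSE m n k).1 (boxSE m n k).2 t X Y) :
    (Finset.Icc 1 m \ Finset.image X (Finset.Icc 1 t)) ∪
        Finset.image Y (Finset.Icc 1 t) =
      (Finset.Icc 1 (m + n) \
        Finset.image (fun j => assocPerm m n col j) (Finset.Icc 1 k)) ∪
        Finset.Icc 1 (k - n) := by
  obtain ⟨r, rfl⟩ : ∃ r, k = n + r := ⟨k - n, by omega⟩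
  have hbox : boxSE m n (n + r) = (r + 1, m + n) := by
    rw [boxSE, if_neg (by omega), Nat.add_sub_cancel_left]
  rw [hbox] at hchain
  rw [Nat.add_sub_cancel_left, show (fun j => assocPerm m n col j) = readingWord m n col from rfl,
    image_readingWord_Icc hchain (by omega)]
  refine Icc_sdiff_union_eq (by omega) (fun x hx => ?_) (fun x hx => ?_)
  · obtain ⟨i, hi, rfl⟩ := mem_image.1 hx
    exact mem_Icc.2 ⟨hchain.le_X (by simpa using hi), (hchain.inGrid (by simpa using hi)).2.1⟩
  · obtain ⟨i, hi, rfl⟩ := mem_image.1 hx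
    exact mem_Icc.2 (hchain.inGrid (by simpa using hi)).2.2

/-- Let `col` be an `m × n` Cauchon diagram with associated permutation `v`, let
`k ∈ {n+1,...,m+n-1}`, and let `(X 1, Y 1),...,(X t, Y t)` be the chain rooted at box `k`
on the south-east border.  Then
`({1,...,m} \ {X 1,...,X t}) ∪ {Y 1,...,Y t} = ({1,...,m+n} \ v({1,...,k})) ∪ {1,...,k-n}`. -/
theorem chain_at_boxSE_eq_complement_high
    (m n : ℕ) (hm : 2 ≤ m) (hn : 2 ≤ n)
    (col : ℕ × ℕ → Bool) (hC : IsCauchon m n col)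
    (k : ℕ) (hk1 : n + 1 ≤ k) (hkn : k ≤ m + n - 1)
    (t : ℕ) (X Y : ℕ → ℕ)
    (hchain : IsChainRootedAt m n col (boxSE m n k).1 (boxSE m n k).2 t X Y) :
    (Finset.Icc 1 m \ Finset.image X (Finset.Icc 1 t)) ∪
        Finset.image Y (Finset.Icc 1 t) =
      (Finset.Icc 1 (m + n) \
        Finset.image (fun j => assocPerm m n col j) (Finset.Icc 1 k)) ∪
        Finset.Icc 1 (k - n) :=
  chain_at_boxSE_eq_complement_high_general m n col k hk1 hkn t X Y hchain
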